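/- arXiv:2004.07982 — 2 statements merged into one kernel-verified Lean document; each statement's English description precedes it below -/
import Mathlib

section
/- The solution of the upper triangular linear system P·β = e, where P is the n×n matrix with entries p_{ij} = 0 for i>j, p_{1j} = 1, and p_{ij} = ((j-1)!/(j-i)!)·Δ^{i-1} otherwise (Δ > 0), and e = (0,...,0,b_n)^T, is given by β_{n-k} = ((-1)^k · b_n) / ((n-k-1)! · k! · Δ^{n-1}) for k = 0,1,...,n-1. -/
/-!
Row `i` of `P β` only involves `j = i + k` with `0 ≤ k ≤ m := n - 1 - i`, and there the factor
`j!` of `P` cancels the one of `β`, leaving `bₙ Δ^i / Δ^(n-1)` times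
`∑ₖ (-1)^(m-k) / (k! (m-k)!) = (1 - 1)^m / m!`, which vanishes unless `i = n - 1`.
-/

open Finset Nat

theorem sum_range_neg_one_pow_div_factorial_mul_factorial {K : Type*} [Field K] [CharZero K]
    (m : ℕ) :
    ∑ k ∈ range (m + 1), (-1 : K) ^ (m - k) / (k ! * (m - k)! : K) = if m = 0 then 1 else 0 := by
  have hterm : ∀ k ∈ range (m + 1), (-1 : K) ^ (m - k) / (k ! * (m - k)! : K) =
      1 ^ k * (-1) ^ (m - k) * (m.choose k : K) / m ! := by
    intro k hk
    have hm : (m ! : K) ≠ 0 := Nat.cast_ne_zero.mpr m.factorial_ne_zero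
    rw [Nat.cast_choose K (Nat.lt_succ_iff.mp (mem_range.mp hk))]
    field_simp
    ring
  rw [sum_congr rfl hterm, ← sum_div, ← add_pow, add_neg_cancel, zero_pow_eq]
  split_ifs with hm <;> simp [hm]

theorem sum_range_ite_lt_zero {M : Type*} [AddCommMonoid M] {i n : ℕ} (hi : i ≤ n)
    (f : ℕ → M) :
    ∑ j ∈ range n, (if j < i then 0 else f j) = ∑ k ∈ range (n - i), f (i + k) := by
  rw [← sum_range_add_sum_Ico _ hi, sum_Ico_eq_sum_range,
    sum_eq_zero fun j hj => if_pos (mem_range.mp hj), zero_add]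
  exact sum_congr rfl fun k _ => if_neg (by omega)

theorem stmt0_general (n : ℕ) (Δ : ℝ) (hΔ : 0 < Δ) (bn : ℝ)
    (P : Matrix (Fin n) (Fin n) ℝ)
    (hP : ∀ i j : Fin n, P i j =
      if (j : ℕ) < (i : ℕ) then 0
      else ((Nat.factorial (j : ℕ) : ℝ) / (Nat.factorial ((j : ℕ) - (i : ℕ)) : ℝ)) * Δ ^ (i : ℕ))
    (β : Fin n → ℝ)
    (hβ : ∀ i : Fin n, β i = ((-1 : ℝ) ^ (n - 1 - (i : ℕ)) * bn) /
      ((Nat.factorial (i : ℕ) : ℝ) * (Nat.factorial (n - 1 - (i : ℕ)) : ℝ) * Δ ^ (n - 1)))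
    (e : Fin n → ℝ)
    (he : ∀ i : Fin n, e i = if (i : ℕ) = n - 1 then bn else 0) :
    P.mulVec β = e := by
  funext i
  set m := n - 1 - (i : ℕ)
  have hnm : n - i = m + 1 := by omega
  have hterm : ∀ k ∈ range (n - i),
      ((i + k)! / (i + k - i)! * Δ ^ (i : ℕ)) *
        ((-1) ^ (n - 1 - (i + k)) * bn / ((i + k)! * (n - 1 - (i + k))! * Δ ^ (n - 1))) =
      bn * Δ ^ (i : ℕ) / Δ ^ (n - 1) * ((-1) ^ (m - k) / (k ! * (m - k)!)) := by
    intro k hk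
    rw [Nat.add_sub_cancel_left, show n - 1 - (i + k) = m - k by omega]
    field_simp
  calc P.mulVec β i
      = ∑ j ∈ range n, (if j < i then 0 else (j ! / (j - i)! * Δ ^ (i : ℕ)) *
          ((-1) ^ (n - 1 - j) * bn / (j ! * (n - 1 - j)! * Δ ^ (n - 1)))) := by
        rw [← Fin.sum_univ_eq_sum_range]
        simp only [Matrix.mulVec, dotProduct, hP, hβ, ite_mul, zero_mul]
    _ = bn * Δ ^ (i : ℕ) / Δ ^ (n - 1) *
          ∑ k ∈ range (n - i), (-1) ^ (m - k) / (k ! * (m - k)! : ℝ) := by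
        rw [sum_range_ite_lt_zero i.isLt.le, mul_sum]
        exact sum_congr rfl hterm
    _ = e i := by
        rw [hnm, sum_range_neg_one_pow_div_factorial_mul_factorial, he]
        by_cases hi : (i : ℕ) = n - 1
        · simp only [hi, m, Nat.sub_self, if_true]
          field_simp
        · simp [hi, show m ≠ 0 by omega]

/-- The solution of the upper triangular system `P β = (0,…,0,bₙ)ᵀ`,
where `P i j = (j!)/(j-i)! · Δ^i` (0-based; zero below the diagonal),
is `β_{n-1-k} = (-1)^k bₙ / ((n-k-1)! k! Δ^{n-1})`. -/
theorem stmt0 (n : ℕ) (hn : 1 ≤ n) (Δ : ℝ) (hΔ : 0 < Δ) (bn : ℝ)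
    (P : Matrix (Fin n) (Fin n) ℝ)
    (hP : ∀ i j : Fin n, P i j =
      if (j : ℕ) < (i : ℕ) then 0
      else ((Nat.factorial (j : ℕ) : ℝ) / (Nat.factorial ((j : ℕ) - (i : ℕ)) : ℝ)) * Δ ^ (i : ℕ))
    (β : Fin n → ℝ)
    (hβ : ∀ i : Fin n, β i = ((-1 : ℝ) ^ (n - 1 - (i : ℕ)) * bn) /
      ((Nat.factorial (i : ℕ) : ℝ) * (Nat.factorial (n - 1 - (i : ℕ)) : ℝ) * Δ ^ (n - 1)))
    (e : Fin n → ℝ)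
    (he : ∀ i : Fin n, e i = if (i : ℕ) = n - 1 then bn else 0) :
    P.mulVec β = e :=
  stmt0_general n Δ hΔ bn P hP β hβ e he
end

section
/- Let A ∈ R^{n×n} be a single Jordan block with eigenvalue λ, and let b, b' ∈ R^n be two vectors agreeing in their last coordinate: b_n = b'_n. Then for every N, the n-dimensional volumes of the zonotopes generated by the columns of [b, Ab, ..., A^{N-1}b] and [b', Ab', ..., A^{N-1}b'] are equal. -/
/-!
Write `A = λ • 1 + S` with `S` the nilpotent shift. Every vector `v` equals `T_v e`, where `e` is
the last standard basis vector and `T_v = ∑ₖ v_{n-1-k} Sᵏ` is upper triangular with constant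
diagonal `v_{n-1}`. As a polynomial in `S`, `T_v` commutes with `A`, so it maps the zonotope
generated by the `Aᵏ e` onto the one generated by the `Aᵏ v`. Hence the volume of the latter is
`|v_{n-1}|ⁿ` times that of the former, and it depends on `v` only through `v_{n-1}`.
-/

open MeasureTheory

namespace Matrix

def shiftMatrix (R : Type*) [Zero R] [One R] (n : ℕ) : Matrix (Fin n) (Fin n) R :=
  of fun i j => if (j : ℕ) = i + 1 then 1 else 0

variable {R : Type*} [CommSemiring R] {n : ℕ}

theorem shiftMatrix_pow_apply (k : ℕ) (i j : Fin n) :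
    (shiftMatrix R n ^ k) i j = if (j : ℕ) = i + k then 1 else 0 := by
  induction k generalizing j with
  | zero => simp [one_apply, Fin.ext_iff, eq_comm]
  | succ k ih =>
    rw [pow_succ, mul_apply]
    simp_rw [ih, shiftMatrix, of_apply, ite_zero_mul_ite_zero, one_mul]
    by_cases h : (i : ℕ) + k < n
    · rw [Finset.sum_eq_single ⟨i + k, h⟩]
      · simp only [true_and, add_assoc]
      · exact fun l _ hl => if_neg fun h' => hl (Fin.ext h'.1)
      · simp
    · rw [Finset.sum_eq_zero fun l _ => if_neg (by have := l.2; omega),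
        if_neg (by have := j.2; omega)]

def upperToeplitz (v : Fin n → R) : Matrix (Fin n) (Fin n) R :=
  ∑ k : Fin n, v k.rev • shiftMatrix R n ^ (k : ℕ)

theorem upperToeplitz_apply (v : Fin n → R) (i j : Fin n) :
    upperToeplitz v i j = ∑ k : Fin n, if (j : ℕ) = i + k then v k.rev else 0 := by
  simp [upperToeplitz, sum_apply, shiftMatrix_pow_apply]

theorem commute_shiftMatrix_upperToeplitz (v : Fin n → R) :
    Commute (shiftMatrix R n) (upperToeplitz v) :=
  Commute.sum_right _ _ _ fun _ _ => ((Commute.refl _).pow_right _).smul_right _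

theorem upperToeplitz_mulVec_single_last {m : ℕ} (v : Fin (m + 1) → R) :
    upperToeplitz v *ᵥ Pi.single (Fin.last m) 1 = v := by
  ext i
  rw [mulVec_single_one, col_apply, upperToeplitz_apply, Finset.sum_eq_single i.rev]
  · simp only [Fin.val_rev, Fin.val_last, Fin.rev_rev, ite_eq_left_iff]
    intro h
    have := i.2
    omega
  · intro k _ hk
    refine if_neg fun h => hk (Fin.ext ?_)
    simp only [Fin.val_rev, Fin.val_last] at h ⊢
    have := i.2
    omega
  · simp

theorem isUpperTriangular_upperToeplitz (v : Fin n → R) :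
    (upperToeplitz v).IsUpperTriangular := by
  intro i j hij
  rw [upperToeplitz_apply]
  exact Finset.sum_eq_zero fun k _ => if_neg (by have : (j : ℕ) < i := hij; omega)

theorem upperToeplitz_apply_self {m : ℕ} (v : Fin (m + 1) → R) (i : Fin (m + 1)) :
    upperToeplitz v i i = v (Fin.last m) := by
  rw [upperToeplitz_apply, Finset.sum_eq_single 0]
  · simp
  · exact fun k _ hk => if_neg fun h => hk (Fin.ext (by rw [Fin.val_zero]; omega))
  · simp

theorem det_upperToeplitz {R : Type*} [CommRing R] {m : ℕ} (v : Fin (m + 1) → R) :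
    (upperToeplitz v).det = v (Fin.last m) ^ (m + 1) := by
  simp [det_of_isUpperTriangular (isUpperTriangular_upperToeplitz v), upperToeplitz_apply_self]

def jordanBlock (n : ℕ) (lam : R) : Matrix (Fin n) (Fin n) R :=
  lam • 1 + shiftMatrix R n

theorem jordanBlock_apply (lam : R) (i j : Fin n) :
    jordanBlock n lam i j = if i = j then lam else if (j : ℕ) = i + 1 then 1 else 0 := by
  by_cases h : i = j <;> simp [h, jordanBlock, shiftMatrix]

theorem commute_jordanBlock_upperToeplitz (lam : R) (v : Fin n → R) :
    Commute (jordanBlock n lam) (upperToeplitz v) :=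
  ((Commute.one_left _).smul_left lam).add_left (commute_shiftMatrix_upperToeplitz v)

theorem jordanBlock_pow_mulVec {m : ℕ} (lam : R) (v : Fin (m + 1) → R) (k : ℕ) :
    jordanBlock (m + 1) lam ^ k *ᵥ v =
      upperToeplitz v *ᵥ (jordanBlock (m + 1) lam ^ k *ᵥ Pi.single (Fin.last m) 1) := by
  conv_lhs => rw [← upperToeplitz_mulVec_single_last v]
  rw [mulVec_mulVec, mulVec_mulVec, ((commute_jordanBlock_upperToeplitz lam v).pow_left k).eq]

end Matrix

open Matrix

def zonotope {E ι : Type*} [AddCommMonoid E] [Module ℝ E] [Fintype ι] (w : ι → E) : Set E :=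
  {x | ∃ c : ι → ℝ, (∀ k, |c k| ≤ 1) ∧ x = ∑ k, c k • w k}

theorem image_zonotope {E F ι : Type*} [AddCommMonoid E] [Module ℝ E] [AddCommMonoid F]
    [Module ℝ F] [Fintype ι] (f : E →ₗ[ℝ] F) (w : ι → E) :
    f '' zonotope w = zonotope fun k => f (w k) := by
  ext x
  constructor
  · rintro ⟨_, ⟨c, hc, rfl⟩, rfl⟩
    exact ⟨c, hc, by simp⟩
  · rintro ⟨c, hc, rfl⟩
    exact ⟨_, ⟨c, hc, rfl⟩, by simp⟩

theorem volume_zonotope_mulVec {ι m : Type*} [Fintype ι] [Fintype m] [DecidableEq m]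
    (T : Matrix m m ℝ) (w : ι → m → ℝ) :
    volume (zonotope fun k => T *ᵥ w k) = ENNReal.ofReal |T.det| * volume (zonotope w) := by
  rw [← LinearMap.det_toLin', ← Measure.addHaar_image_linearMap, image_zonotope]
  rfl

theorem volume_zonotope_jordanBlock_pow_mulVec {m : ℕ} (lam : ℝ) (v : Fin (m + 1) → ℝ)
    (N : ℕ) :
    volume (zonotope fun k : Fin N => jordanBlock (m + 1) lam ^ (k : ℕ) *ᵥ v) =
      ENNReal.ofReal (|v (Fin.last m)| ^ (m + 1)) *
        volume (zonotope fun k : Fin N =>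
          jordanBlock (m + 1) lam ^ (k : ℕ) *ᵥ Pi.single (Fin.last m) 1) := by
  simp_rw [jordanBlock_pow_mulVec lam v]
  rw [volume_zonotope_mulVec, det_upperToeplitz, abs_pow]

/-- For a single Jordan block `A` with eigenvalue `λ`, if `b` and `b'`
agree in their last coordinate, then for every `N` the volumes of the zonotopes
generated by `b, Ab, …, A^{N-1}b` and `b', Ab', …, A^{N-1}b'` coincide. -/
theorem stmt6 (n : ℕ) (hn : 1 ≤ n) (lam : ℝ)
    (A : Matrix (Fin n) (Fin n) ℝ)
    (hA : ∀ i j : Fin n, A i j =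
      if i = j then lam else if (j : ℕ) = (i : ℕ) + 1 then 1 else 0)
    (b b' : Fin n → ℝ) (hlast : b ⟨n - 1, by omega⟩ = b' ⟨n - 1, by omega⟩)
    (N : ℕ) :
    volume {x : Fin n → ℝ | ∃ c : Fin N → ℝ, (∀ k, |c k| ≤ 1) ∧
        x = ∑ k : Fin N, c k • (A ^ (k : ℕ)).mulVec b} =
    volume {x : Fin n → ℝ | ∃ c : Fin N → ℝ, (∀ k, |c k| ≤ 1) ∧
        x = ∑ k : Fin N, c k • (A ^ (k : ℕ)).mulVec b'} := by
  obtain ⟨m, rfl⟩ : ∃ m, n = m + 1 := ⟨n - 1, by omega⟩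
  obtain rfl : A = jordanBlock (m + 1) lam :=
    ext fun i j => (hA i j).trans (jordanBlock_apply ..).symm
  have hlast : b (Fin.last m) = b' (Fin.last m) := hlast
  change volume (zonotope _) = volume (zonotope _)
  rw [volume_zonotope_jordanBlock_pow_mulVec lam b, volume_zonotope_jordanBlock_pow_mulVec lam b',
    hlast]
end
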